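/- Let C(u_1,u_2) = ∑_{h_1=0}^{l_1} ∑_{h_2=0}^{l_2} η_{h_1,h_2} P_{l_1,h_1}(u_1) P_{l_2,h_2}(u_2) be a polynomial in Bernstein form on [0,1]^2 with density c(u_1,u_2) = ∂²C/∂u_1∂u_2. Then the Kendall functional 4∫_0^1∫_0^1 C(u_1,u_2) c(u_1,u_2) du_1 du_2 − 1 equals 4 ∑_{h_1=0}^{l_1} ∑_{h_2=0}^{l_2} ∑_{g_1=0}^{l_1−1} ∑_{g_2=0}^{l_2−1} η_{h_1,h_2} (η_{g_1+1,g_2+1} − η_{g_1+1,g_2} − η_{g_1,g_2+1} + η_{g_1,g_2}) · ∏_{s=1}^2 l_s C(l_s,h_s) C(l_s−1,g_s) B(h_s+g_s+1, 2l_s−h_s−g_s) − 1, where B is the Beta function. -/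

import Mathlib

/-!
Differentiating a Bernstein form of degree `l` gives `l` times the Bernstein form of degree
`l - 1` whose coefficients are the forward differences of the original ones. Hence the density
`c` is a Bernstein form of degree `(l₁ - 1, l₂ - 1)` with coefficients `l₁ l₂ Δ₁Δ₂η`, the
product `C c` is a finite sum of separable terms, and every one-dimensional factor
`∫₀¹ P_{l,h} P_{l-1,g}` is the Beta integral `C(l,h) C(l-1,g) B(h+g+1, 2l-h-g)`.
-/

/-- Bernstein basis polynomial `P_{l,h}(u) = C(l,h) u^h (1-u)^{l-h}`. -/
noncomputable def bern (l h : ℕ) (u : ℝ) : ℝ := (l.choose h : ℝ) * u ^ h * (1 - u) ^ (l - h)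

/-- The Beta function `B(a,b) = ∫_0^1 t^(a-1) (1-t)^(b-1) dt`. -/
noncomputable def betaFn (a b : ℝ) : ℝ := ∫ t in (0:ℝ)..1, t ^ (a - 1) * (1 - t) ^ (b - 1)

/-- A bivariate polynomial in Bernstein form. -/
noncomputable def bernForm (l₁ l₂ : ℕ) (η : ℕ → ℕ → ℝ) (u₁ u₂ : ℝ) : ℝ :=
  ∑ h₁ ∈ Finset.range (l₁ + 1), ∑ h₂ ∈ Finset.range (l₂ + 1),
    η h₁ h₂ * bern l₁ h₁ u₁ * bern l₂ h₂ u₂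

open Finset
open scoped fwdDiff

theorem continuous_bern (l h : ℕ) : Continuous (bern l h) := by
  unfold bern
  fun_prop

theorem fwdDiff_fwdDiff_apply {M G : Type*} [AddCommMonoid M] [AddCommGroup G] (f : M → M → G)
    (m₁ m₂ x y : M) :
    Δ_[m₁] (fun x => Δ_[m₂] (f x) y) x =
      f (x + m₁) (y + m₂) - f (x + m₁) y - f x (y + m₂) + f x y := by
  simp only [fwdDiff]
  abel

theorem eval_bernsteinPolynomial (l h : ℕ) (u : ℝ) :
    (bernsteinPolynomial ℝ l h).eval u = bern l h u := by
  simp [bern, bernsteinPolynomial]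

-- The factor `l` takes care of `l = 0`, where `l - 1` truncates to `0`.
theorem natCast_mul_bern_pred_self (l : ℕ) (u : ℝ) : (l : ℝ) * bern (l - 1) l u = 0 := by
  rcases l with _ | l
  · simp
  · simp [bern]

theorem hasDerivAt_sum_mul_bern (l : ℕ) (c : ℕ → ℝ) (u : ℝ) :
    HasDerivAt (fun u => ∑ h ∈ range (l + 1), c h * bern l h u)
      (l * ∑ g ∈ range l, Δ_[1] c g * bern (l - 1) g u) u := by
  have hP (h : ℕ) : HasDerivAt (bern l h)
      ((Polynomial.derivative (bernsteinPolynomial ℝ l h)).eval u) u := by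
    simpa only [eval_bernsteinPolynomial] using
      Polynomial.hasDerivAt (bernsteinPolynomial ℝ l h) u
  refine (HasDerivAt.fun_sum fun h _ => (hP h).const_mul (c h)).congr_deriv ?_
  -- summation by parts; the boundary term `c l * P_{l-1,l}` vanishes
  have shift := sum_range_succ' (fun g => c g * bern (l - 1) g u) l
  rw [sum_range_succ] at shift
  simp only [sum_range_succ', bernsteinPolynomial.derivative_succ,
    bernsteinPolynomial.derivative_zero, Polynomial.eval_mul, Polynomial.eval_sub,
    Polynomial.eval_neg, Polynomial.eval_natCast, eval_bernsteinPolynomial, fwdDiff, sub_mul,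
    mul_sub, sum_sub_distrib, mul_left_comm _ (l : ℝ), ← mul_sum]
  linear_combination (l : ℝ) * shift - c l * natCast_mul_bern_pred_self l u

theorem bernForm_eq_sum_snd (l₁ l₂ : ℕ) (η : ℕ → ℕ → ℝ) (u₁ u₂ : ℝ) :
    bernForm l₁ l₂ η u₁ u₂ =
      ∑ h₂ ∈ range (l₂ + 1),
        (∑ h₁ ∈ range (l₁ + 1), η h₁ h₂ * bern l₁ h₁ u₁) * bern l₂ h₂ u₂ := by
  rw [bernForm, sum_comm]
  simp only [sum_mul]

theorem deriv_snd_bernForm (l₁ l₂ : ℕ) (η : ℕ → ℕ → ℝ) (u₁ u₂ : ℝ) :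
    deriv (fun b => bernForm l₁ l₂ η u₁ b) u₂ =
      ∑ g₂ ∈ range l₂,
        (∑ h₁ ∈ range (l₁ + 1), l₂ * Δ_[1] (η h₁) g₂ * bern l₁ h₁ u₁) *
          bern (l₂ - 1) g₂ u₂ := by
  simp only [bernForm_eq_sum_snd]
  rw [(hasDerivAt_sum_mul_bern l₂ _ u₂).deriv, mul_sum]
  refine sum_congr rfl fun g₂ _ => ?_
  simp only [fwdDiff, ← sum_sub_distrib, sum_mul, mul_sum]
  exact sum_congr rfl fun h₁ _ => by ring

theorem deriv_deriv_bernForm (l₁ l₂ : ℕ) (η : ℕ → ℕ → ℝ) (u₁ u₂ : ℝ) :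
    deriv (fun a => deriv (fun b => bernForm l₁ l₂ η a b) u₂) u₁ =
      ∑ g₁ ∈ range l₁, ∑ g₂ ∈ range l₂,
        l₁ * l₂ * Δ_[1] (fun h₁ => Δ_[1] (η h₁) g₂) g₁ * bern (l₁ - 1) g₁ u₁ *
          bern (l₂ - 1) g₂ u₂ := by
  simp only [deriv_snd_bernForm]
  rw [(HasDerivAt.fun_sum fun g₂ _ =>
    (hasDerivAt_sum_mul_bern l₁ _ u₁).mul_const (bern (l₂ - 1) g₂ u₂)).deriv]
  simp only [mul_sum, sum_mul]
  rw [sum_comm]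
  refine sum_congr rfl fun g₁ _ => sum_congr rfl fun g₂ _ => ?_
  simp only [fwdDiff]
  ring

section Integral

variable {ι κ : Type*}

theorem integral_sum_mul_sum (s : Finset ι) (t : Finset κ) (c : ι → ℝ) (d : κ → ℝ)
    (f : ι → ℝ → ℝ) (g : κ → ℝ → ℝ) (hf : ∀ i, Continuous (f i))
    (hg : ∀ j, Continuous (g j)) (a b : ℝ) :
    ∫ x in a..b, (∑ i ∈ s, c i * f i x) * (∑ j ∈ t, d j * g j x) =
      ∑ i ∈ s, ∑ j ∈ t, c i * d j * ∫ x in a..b, f i x * g j x := by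
  have hfg (i : ι) (j : κ) : Continuous fun x => c i * f i x * (d j * g j x) := by fun_prop
  simp only [sum_mul_sum]
  rw [intervalIntegral.integral_finsetSum fun i _ =>
    (continuous_finsetSum t fun j _ => hfg i j).intervalIntegrable a b]
  refine sum_congr rfl fun i _ => ?_
  rw [intervalIntegral.integral_finsetSum fun j _ => (hfg i j).intervalIntegrable a b]
  refine sum_congr rfl fun j _ => ?_
  rw [← intervalIntegral.integral_const_mul]
  exact intervalIntegral.integral_congr fun x _ => by ring

theorem integral_integral_sum_sum_mul_sum_sum (s s' : Finset ι) (t t' : Finset κ)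
    (a b : ι → κ → ℝ) (f f' : ι → ℝ → ℝ) (g g' : κ → ℝ → ℝ)
    (hf : ∀ i, Continuous (f i)) (hf' : ∀ i, Continuous (f' i))
    (hg : ∀ j, Continuous (g j)) (hg' : ∀ j, Continuous (g' j)) (x₀ x₁ y₀ y₁ : ℝ) :
    ∫ y in y₀..y₁, ∫ x in x₀..x₁,
        (∑ i ∈ s, ∑ j ∈ t, a i j * f i x * g j y) *
          (∑ i' ∈ s', ∑ j' ∈ t', b i' j' * f' i' x * g' j' y) =
      ∑ i ∈ s, ∑ j ∈ t, ∑ i' ∈ s', ∑ j' ∈ t',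
        a i j * b i' j' * (∫ x in x₀..x₁, f i x * f' i' x) *
          ∫ y in y₀..y₁, g j y * g' j' y := by
  have sep (s : Finset ι) (t : Finset κ) (a : ι → κ → ℝ) (f : ι → ℝ → ℝ)
      (g : κ → ℝ → ℝ) (x y : ℝ) :
      ∑ i ∈ s, ∑ j ∈ t, a i j * f i x * g j y =
        ∑ i ∈ s, (∑ j ∈ t, a i j * g j y) * f i x := by
    simp only [sum_mul]
    exact sum_congr rfl fun i _ => sum_congr rfl fun j _ => by ring
  simp only [sep, integral_sum_mul_sum _ _ _ _ _ _ hf hf']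
  have hgg (i : ι) (i' : ι) (r : ℝ) : Continuous fun y =>
      (∑ j ∈ t, a i j * g j y) * (∑ j' ∈ t', b i' j' * g' j' y) * r := by fun_prop
  rw [intervalIntegral.integral_finsetSum fun i _ =>
    (continuous_finsetSum s' fun i' _ => hgg i i' _).intervalIntegrable y₀ y₁]
  refine sum_congr rfl fun i _ => ?_
  rw [intervalIntegral.integral_finsetSum fun i' _ => (hgg i i' _).intervalIntegrable y₀ y₁]
  simp only [intervalIntegral.integral_mul_const]
  simp only [integral_sum_mul_sum _ _ _ _ _ _ hg hg']
  simp only [sum_mul]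
  rw [sum_comm]
  exact sum_congr rfl fun j _ => sum_congr rfl fun i' _ => sum_congr rfl fun j' _ => by ring

end Integral

theorem betaFn_natCast_add_one (m n : ℕ) :
    betaFn (m + 1) (n + 1) = ∫ t in (0 : ℝ)..1, t ^ m * (1 - t) ^ n := by
  simp only [betaFn, add_sub_cancel_right, Real.rpow_natCast]

theorem integral_bern_mul_bern {l h k g : ℕ} (hh : h ≤ l) (hg : g ≤ k) :
    ∫ u in (0 : ℝ)..1, bern l h u * bern k g u =
      l.choose h * k.choose g * betaFn (h + g + 1) (l + k - h - g + 1) := by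
  have hm : (h : ℝ) + g = ((h + g : ℕ) : ℝ) := by push_cast; ring
  have hn : (l : ℝ) + k - h - g = ((l - h + (k - g) : ℕ) : ℝ) := by
    rw [Nat.cast_add, Nat.cast_sub hh, Nat.cast_sub hg]; ring
  rw [hm, hn, betaFn_natCast_add_one, ← intervalIntegral.integral_const_mul]
  refine intervalIntegral.integral_congr fun u _ => ?_
  simp only [bern, pow_add]
  ring

theorem integral_bern_mul_bern_pred {l h g : ℕ} (hh : h ∈ range (l + 1)) (hg : g ∈ range l) :
    ∫ u in (0 : ℝ)..1, bern l h u * bern (l - 1) g u =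
      l.choose h * (l - 1).choose g * betaFn (h + g + 1) (2 * l - h - g) := by
  rw [mem_range] at hh hg
  rw [integral_bern_mul_bern (by omega) (by omega), Nat.cast_sub (by omega : 1 ≤ l)]
  ring_nf

theorem kendall_functional_closed_form_general (l₁ l₂ : ℕ)
    (η : ℕ → ℕ → ℝ) :
    4 * (∫ u₂ in (0:ℝ)..1, ∫ u₁ in (0:ℝ)..1,
        bernForm l₁ l₂ η u₁ u₂ *
          deriv (fun a => deriv (fun b => bernForm l₁ l₂ η a b) u₂) u₁) - 1 =
      4 * (∑ h₁ ∈ Finset.range (l₁ + 1), ∑ h₂ ∈ Finset.range (l₂ + 1),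
        ∑ g₁ ∈ Finset.range l₁, ∑ g₂ ∈ Finset.range l₂,
          η h₁ h₂ *
            (η (g₁ + 1) (g₂ + 1) - η (g₁ + 1) g₂ - η g₁ (g₂ + 1) + η g₁ g₂) *
            ((l₁ : ℝ) * (l₁.choose h₁ : ℝ) * ((l₁ - 1).choose g₁ : ℝ) *
              betaFn (h₁ + g₁ + 1) (2 * l₁ - h₁ - g₁)) *
            ((l₂ : ℝ) * (l₂.choose h₂ : ℝ) * ((l₂ - 1).choose g₂ : ℝ) *
              betaFn (h₂ + g₂ + 1) (2 * l₂ - h₂ - g₂))) - 1 := by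
  simp only [deriv_deriv_bernForm]
  unfold bernForm
  rw [integral_integral_sum_sum_mul_sum_sum _ _ _ _ _ _ _ _ _ _ (continuous_bern l₁)
    (continuous_bern (l₁ - 1)) (continuous_bern l₂) (continuous_bern (l₂ - 1))]
  refine congrArg (4 * · - 1) (sum_congr rfl fun h₁ hh₁ => sum_congr rfl fun h₂ hh₂ =>
    sum_congr rfl fun g₁ hg₁ => sum_congr rfl fun g₂ hg₂ => ?_)
  rw [integral_bern_mul_bern_pred hh₁ hg₁, integral_bern_mul_bern_pred hh₂ hg₂,
    fwdDiff_fwdDiff_apply]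
  ring

/-- Closed-form expression for the Kendall functional
`4∫∫ C·c du₁du₂ − 1` of a bivariate Bernstein-form polynomial, where
`c = ∂²C/∂u₁∂u₂`. -/
theorem kendall_functional_closed_form (l₁ l₂ : ℕ) (hl₁ : 1 ≤ l₁) (hl₂ : 1 ≤ l₂)
    (η : ℕ → ℕ → ℝ) :
    4 * (∫ u₂ in (0:ℝ)..1, ∫ u₁ in (0:ℝ)..1,
        bernForm l₁ l₂ η u₁ u₂ *
          deriv (fun a => deriv (fun b => bernForm l₁ l₂ η a b) u₂) u₁) - 1 =
      4 * (∑ h₁ ∈ Finset.range (l₁ + 1), ∑ h₂ ∈ Finset.range (l₂ + 1),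
        ∑ g₁ ∈ Finset.range l₁, ∑ g₂ ∈ Finset.range l₂,
          η h₁ h₂ *
            (η (g₁ + 1) (g₂ + 1) - η (g₁ + 1) g₂ - η g₁ (g₂ + 1) + η g₁ g₂) *
            ((l₁ : ℝ) * (l₁.choose h₁ : ℝ) * ((l₁ - 1).choose g₁ : ℝ) *
              betaFn (h₁ + g₁ + 1) (2 * l₁ - h₁ - g₁)) *
            ((l₂ : ℝ) * (l₂.choose h₂ : ℝ) * ((l₂ - 1).choose g₂ : ℝ) *
              betaFn (h₂ + g₂ + 1) (2 * l₂ - h₂ - g₂))) - 1 :=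
  kendall_functional_closed_form_general l₁ l₂ η
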